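/- arXiv:2004.11708 — 2 statements merged into one kernel-verified Lean document; each statement's English description precedes it below -/
import Mathlib

section
/- Let X be a complex Banach space, A a bounded linear operator on X, and M a closed subspace of X invariant under A (i.e., A(M) ⊆ M). Let D be a connected component of the resolvent set ρ(A) of A. If D ∩ σ(A|_M) ≠ ∅, where A|_M denotes the restriction of A to M, then D ⊆ σ(A|_M). -/
/-!
For `w ∈ ρ(A)`, the point `w` lies in `ρ(A|_M)` exactly when the resolvent `(w - A)⁻¹` maps `M`
into `M`. Hence `ρ(A) ∩ ρ(A|_M)` is open (as `ρ(A|_M)` is) and closed in `ρ(A)` (the resolvent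
is norm-continuous on `ρ(A)` and `M` is closed), so it is a union of connected components of `ρ(A)`.
-/

/-- The restriction of a bounded linear operator `A` to a closed invariant
subspace `M`, as a bounded linear operator on `M`. -/
noncomputable def restrictToInvariant {X : Type*} [NormedAddCommGroup X] [NormedSpace ℂ X]
    (A : X →L[ℂ] X) (M : Submodule ℂ X) (hinv : ∀ x ∈ M, A x ∈ M) :
    M →L[ℂ] M :=
  (A.comp M.subtypeL).codRestrict M (fun x => hinv x.1 x.2)

section RestrictToInvariant

variable {X : Type*} [NormedAddCommGroup X] [NormedSpace ℂ X] {M : Submodule ℂ X}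

@[simp]
theorem coe_restrictToInvariant_apply (B : X →L[ℂ] X) (hB : ∀ x ∈ M, B x ∈ M) (y : M) :
    (restrictToInvariant B M hB y : X) = B y :=
  rfl

theorem restrictToInvariant_algebraMap_sub (A : X →L[ℂ] X) (hinv : ∀ x ∈ M, A x ∈ M) (w : ℂ)
    (hB : ∀ x ∈ M, (algebraMap ℂ (X →L[ℂ] X) w - A) x ∈ M) :
    restrictToInvariant (algebraMap ℂ (X →L[ℂ] X) w - A) M hB =
      algebraMap ℂ (M →L[ℂ] M) w - restrictToInvariant A M hinv := by
  ext y
  simp [Algebra.algebraMap_eq_smul_one]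

theorem isUnit_restrictToInvariant_iff {B : X →L[ℂ] X} (hB : ∀ x ∈ M, B x ∈ M) (hunit : IsUnit B) :
    IsUnit (restrictToInvariant B M hB) ↔ ∀ x ∈ M, Ring.inverse B x ∈ M := by
  obtain ⟨u, rfl⟩ := hunit
  rw [Ring.inverse_unit]
  constructor
  · rintro ⟨v, hv⟩ x hx
    have hx' : (u : X →L[ℂ] X) ((↑v⁻¹ : M →L[ℂ] M) ⟨x, hx⟩) = x := by
      have := congr(($(v.mul_inv) ⟨x, hx⟩ : X))
      rwa [mul_apply_eq_comp, one_apply_eq_self, hv] at this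
    rw [← hx', ← mul_apply_eq_comp, u.inv_mul, one_apply_eq_self]
    exact Submodule.coe_mem _
  · intro h
    refine ⟨⟨restrictToInvariant u M hB, restrictToInvariant ↑u⁻¹ M h, ?_, ?_⟩, rfl⟩ <;> ext y
    · exact congr($(u.mul_inv) (y : X))
    · exact congr($(u.inv_mul) (y : X))

theorem mem_resolventSet_restrictToInvariant_iff {A : X →L[ℂ] X} (hinv : ∀ x ∈ M, A x ∈ M) {w : ℂ}
    (hw : w ∈ resolventSet ℂ A) :
    w ∈ resolventSet ℂ (restrictToInvariant A M hinv) ↔ ∀ x ∈ M, resolvent A w x ∈ M := by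
  have hB : ∀ x ∈ M, (algebraMap ℂ (X →L[ℂ] X) w - A) x ∈ M := fun x hx =>
    M.sub_mem (by simpa [Algebra.algebraMap_eq_smul_one] using M.smul_mem w hx) (hinv x hx)
  rw [spectrum.mem_resolventSet_iff, ← restrictToInvariant_algebraMap_sub A hinv w hB]
  exact isUnit_restrictToInvariant_iff hB hw

theorem closure_resolventSet_restrictToInvariant_inter_subset [CompleteSpace X]
    (A : X →L[ℂ] X) (hM : IsClosed (M : Set X)) (hinv : ∀ x ∈ M, A x ∈ M) :
    closure (resolventSet ℂ (restrictToInvariant A M hinv)) ∩ resolventSet ℂ A ⊆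
      resolventSet ℂ (restrictToInvariant A M hinv) := by
  rintro w ⟨hwT, hwA⟩
  refine (mem_resolventSet_restrictToInvariant_iff hinv hwA).2 fun x hx => ?_
  have hcont : ContinuousAt (fun v => resolvent A v x) w :=
    ((spectrum.hasDerivAt_resolvent_const_left hwA).continuousAt).clm_apply continuousAt_const
  have hw : w ∈ closure (resolventSet ℂ (restrictToInvariant A M hinv) ∩ resolventSet ℂ A) :=
    (spectrum.isOpen_resolventSet A).closure_inter ⟨hwT, hwA⟩
  refine hM.closure_subset_iff.2 ?_ (mem_closure_image (f := fun v => resolvent A v x) hcont hw)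
  rintro _ ⟨v, ⟨hvT, hvA⟩, rfl⟩
  exact (mem_resolventSet_restrictToInvariant_iff hinv hvA).1 hvT x hx

theorem IsPreconnected.subset_resolventSet_restrictToInvariant [CompleteSpace X]
    {A : X →L[ℂ] X} (hM : IsClosed (M : Set X)) (hinv : ∀ x ∈ M, A x ∈ M) {s : Set ℂ}
    (hs : IsPreconnected s) (hsA : s ⊆ resolventSet ℂ A)
    (hne : (s ∩ resolventSet ℂ (restrictToInvariant A M hinv)).Nonempty) :
    s ⊆ resolventSet ℂ (restrictToInvariant A M hinv) :=
  have : CompleteSpace M := hM.completeSpace_coe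
  hs.subset_of_closure_inter_subset
    (spectrum.isOpen_resolventSet (𝕜 := ℂ) (restrictToInvariant A M hinv)) hne
    fun _ hw => closure_resolventSet_restrictToInvariant_inter_subset A hM hinv ⟨hw.1, hsA hw.2⟩

end RestrictToInvariant

/-- If `D` is a connected component of the resolvent set of `A` and `D` meets the
spectrum of the restriction `A|_M`, then `D` is contained in the spectrum of `A|_M`. -/
theorem spectrum_restrict_component {X : Type*} [NormedAddCommGroup X] [NormedSpace ℂ X]
    [CompleteSpace X] (A : X →L[ℂ] X) (M : Submodule ℂ X) (hM : IsClosed (M : Set X))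
    (hinv : ∀ x ∈ M, A x ∈ M) (D : Set ℂ)
    (hD : ∃ z ∈ resolventSet ℂ A, D = connectedComponentIn (resolventSet ℂ A) z)
    (hne : (D ∩ spectrum ℂ (restrictToInvariant A M hinv)).Nonempty) :
    D ⊆ spectrum ℂ (restrictToInvariant A M hinv) := by
  obtain ⟨z, -, rfl⟩ := hD
  intro μ hμD hμ
  obtain ⟨w, hwD, hwσ⟩ := hne
  exact hwσ <| isPreconnected_connectedComponentIn.subset_resolventSet_restrictToInvariant hM hinv
    (connectedComponentIn_subset _ _) ⟨μ, hμD, hμ⟩ hwD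
end

section
/- Let X be a complex Banach space, A a bounded linear operator on X, and M a closed subspace of X invariant under A. Then σ(A|_M) is contained in the union of σ(A) and the bounded connected components of ℂ \ σ(A); that is, σ(A|_M) is contained in the polynomially convex hull of σ(A) (the complement of the unbounded component of ℂ \ σ(A)). -/
namespace Submodule

section NormedField

variable {𝕜 E : Type*} [NormedField 𝕜] [NormedAddCommGroup E] [NormedSpace 𝕜 E]
  (M : Submodule 𝕜 E)

def invariantOperators : Subalgebra 𝕜 (E →L[𝕜] E) where
  carrier := {T | ∀ x ∈ M, T x ∈ M}
  mul_mem' hS hT x hx := hS _ (hT x hx)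
  add_mem' hS hT x hx := M.add_mem (hS x hx) (hT x hx)
  algebraMap_mem' c _ hx := M.smul_mem c hx

theorem isClosed_invariantOperators (hM : IsClosed (M : Set E)) :
    IsClosed (M.invariantOperators : Set (E →L[𝕜] E)) := by
  show IsClosed {T : E →L[𝕜] E | ∀ x ∈ M, T x ∈ M}
  simp only [Set.ofPred_forall]
  exact isClosed_iInter fun x => isClosed_iInter fun _ => hM.preimage (continuous_eval_const x)

noncomputable def restrictInvariantOperators : M.invariantOperators →ₐ[𝕜] (M →L[𝕜] M) where
  toFun T := ((T : E →L[𝕜] E).comp M.subtypeL).codRestrict M fun x => T.2 x.1 x.2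
  map_one' := rfl
  map_mul' _ _ := rfl
  map_zero' := rfl
  map_add' _ _ := rfl
  commutes' _ := rfl

end NormedField

theorem restrictInvariantOperators_mk {X : Type*} [NormedAddCommGroup X] [NormedSpace ℂ X]
    (A : X →L[ℂ] X) (M : Submodule ℂ X) (hinv : ∀ x ∈ M, A x ∈ M) :
    M.restrictInvariantOperators ⟨A, hinv⟩ = restrictToInvariant A M hinv :=
  rfl

end Submodule

/-- The spectrum of the restriction `A|_M` is contained in the polynomially convex hull of
the spectrum of `A`: every point of `σ(A|_M)` lies either in `σ(A)` or in a bounded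
connected component (a hole) of `ℂ \ σ(A)`. -/
theorem spectrum_restrict_subset_polyHull {X : Type*} [NormedAddCommGroup X]
    [NormedSpace ℂ X] [CompleteSpace X] (A : X →L[ℂ] X) (M : Submodule ℂ X)
    (hM : IsClosed (M : Set X)) (hinv : ∀ x ∈ M, A x ∈ M) :
    ∀ z ∈ spectrum ℂ (restrictToInvariant A M hinv),
      z ∈ spectrum ℂ A ∨
        Bornology.IsBounded (connectedComponentIn (spectrum ℂ A)ᶜ z) := by
  intro z hz
  rw [← M.restrictInvariantOperators_mk A hinv] at hz
  have hzS : z ∈ spectrum ℂ (⟨A, hinv⟩ : M.invariantOperators) :=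
    AlgHom.spectrum_apply_subset M.restrictInvariantOperators _ hz
  have : IsClosed (M.invariantOperators : Set (X →L[ℂ] X)) := M.isClosed_invariantOperators hM
  have hbdd := Subalgebra.spectrum_isBounded_connectedComponentIn M.invariantOperators _ hzS
  exact .inr hbdd
end
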